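/- arXiv:1810.05382 — 4 statements merged into one kernel-verified Lean document; each statement's English description precedes it below -/
import Mathlib

section
/- Let R(S,U) be the infimum of f + v − S − U over all polyhedral pairs (f,v) with f ≥ S and v ≥ U. Then R(S,U) equals: ⌈S/2⌉ − U + 2 if S > 4 and S > 2U − 4; ⌈U/2⌉ − S + 2 if U > 4 and U > 2S − 4; 8 − S − U if S ≤ 4 and U ≤ 4; and 0 otherwise. -/
/-- `(x, y)` is a polyhedral pair: `x ≥ 4` and `x/2 + 2 ≤ y ≤ 2x - 4`
(the first inequality written as `x + 4 ≤ 2y`). -/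
def IsPolyhedralPair (x y : ℕ) : Prop := 4 ≤ x ∧ x + 4 ≤ 2 * y ∧ y ≤ 2 * x - 4

/-- `R(S,U)`: the infimum of `f + v - S - U` over all polyhedral pairs `(f, v)`
with `f ≥ S` and `v ≥ U`. -/
noncomputable def Rfun (S U : ℕ) : ℕ :=
  sInf {n : ℕ | ∃ f v : ℕ, IsPolyhedralPair f v ∧ S ≤ f ∧ U ≤ v ∧ n = f + v - S - U}

/-- The explicit formula for `R(S,U)`. Here `⌈S/2⌉ - U + 2` is written as
`(S + 1) / 2 + 2 - U` (with `(S+1)/2 = ⌈S/2⌉` in natural division), and similarly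
for the second case. -/
theorem Rfun_formula (S U : ℕ) (hS : 0 < S) (hU : 0 < U) :
    (4 < S → 2 * U - 4 < S → Rfun S U = (S + 1) / 2 + 2 - U) ∧
    (4 < U → 2 * S - 4 < U → Rfun S U = (U + 1) / 2 + 2 - S) ∧
    (S ≤ 4 → U ≤ 4 → Rfun S U = 8 - S - U) ∧
    (¬(4 < S ∧ 2 * U - 4 < S) → ¬(4 < U ∧ 2 * S - 4 < U) → ¬(S ≤ 4 ∧ U ≤ 4) →
      Rfun S U = 0) := by
  have key : ∀ (m : ℕ) (f v : ℕ), IsPolyhedralPair f v → S ≤ f → U ≤ v →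
      m = f + v - S - U →
      (∀ f' v', IsPolyhedralPair f' v' → S ≤ f' → U ≤ v' → m ≤ f' + v' - S - U) →
      Rfun S U = m := by
    intro m f v hp hf hv hm hlb
    unfold Rfun
    apply le_antisymm
    · exact Nat.sInf_le ⟨f, v, hp, hf, hv, hm⟩
    · apply le_csInf
      · exact ⟨m, f, v, hp, hf, hv, hm⟩
      rintro n ⟨f', v', hp', hf', hv', rfl⟩
      exact hlb f' v' hp' hf' hv'
  refine ⟨?_, ?_, ?_, ?_⟩
  · intro h1 h2
    apply key ((S + 1) / 2 + 2 - U) S ((S + 1) / 2 + 2) ⟨by omega, by omega, by omega⟩ le_rfl (by omega)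
      (by omega)
    rintro f' v' ⟨a, b, c⟩ hf' hv'
    omega
  · intro h1 h2
    apply key ((U + 1) / 2 + 2 - S) ((U + 1) / 2 + 2) U ⟨by omega, by omega, by omega⟩ (by omega) le_rfl
      (by omega)
    rintro f' v' ⟨a, b, c⟩ hf' hv'
    omega
  · intro h1 h2
    apply key (8 - S - U) 4 4 ⟨by omega, by omega, by omega⟩ (by omega) (by omega) (by omega)
    rintro f' v' ⟨a, b, c⟩ hf' hv'
    omega
  · intro h1 h2 h3
    apply key 0 S U ⟨by omega, by omega, by omega⟩ le_rfl le_rfl (by omega)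
    intro f' v' _ _ _
    exact Nat.zero_le _
end

section
/- Let S be a nondegenerate simplex in ℝ^d with the origin o in its interior, and let S° be its polar body. Then o is the center of mass (centroid) of S° if and only if o is the center of mass of S. -/
/-!
Let `λᵢ` be the barycentric coordinate functions of the simplex `S` with vertices `pᵢ`; since `o`
is interior, `λᵢ(o) > 0`. The polar `S°` is the simplex whose vertex `qᵢ` is the vector with
`⟪x, qᵢ⟫ = 1 - λᵢ(x) / λᵢ(o)`, and the barycentric coordinates of `y` with respect to the `qᵢ`
are `λᵢ(o) (1 - ⟪pᵢ, y⟫)`. So `o` has the same barycentric coordinates in `S` and in `S°`.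
The center of mass of a simplex is fixed by the affine maps permuting its vertices, hence it is
the average of the vertices, and `o` is the center of mass exactly when all its barycentric
coordinates equal `1 / (d + 1)`: this condition is the same for `S` and `S°`.
-/

open scoped RealInnerProductSpace
open MeasureTheory

noncomputable section

abbrev En (d : ℕ) := EuclideanSpace ℝ (Fin d)

/-- The polar of a set `s`: all `y` with `⟪x, y⟫ ≤ 1` for every `x ∈ s`. -/
def polarSet {d : ℕ} (s : Set (En d)) : Set (En d) := {y | ∀ x ∈ s, ⟪x, y⟫ ≤ 1}

/-- The center of mass (centroid) of a solid `K ⊆ ℝ^d`. -/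
def centroidE {d : ℕ} (K : Set (En d)) : En d := ⨍ x in K, x

theorem affineIndependent_of_affineSpan_eq_top {ι k V P : Type*} [Fintype ι] [DivisionRing k]
    [AddCommGroup V] [Module k V] [AddTorsor V P] {p : ι → P}
    (hp : affineSpan k (Set.range p) = ⊤) (hc : Fintype.card ι = Module.finrank k V + 1) :
    AffineIndependent k p := by
  rw [affineIndependent_iff_le_finrank_vectorSpan k p hc, ← direction_affineSpan, hp,
    AffineSubspace.direction_top, finrank_top]

namespace AffineBasis

variable {ι k V P : Type*} [AddCommGroup V] [AddTorsor V P]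

section Ring

variable [Ring k] [Module k V]

theorem exists_affineEquiv_apply_eq (b c : AffineBasis ι k P) :
    ∃ g : P ≃ᵃ[k] P, ∀ j, g (b j) = c j := by
  obtain ⟨i⟩ := b.nonempty
  let L : V ≃ₗ[k] V := (b.basisOf i).equiv (c.basisOf i) (Equiv.refl _)
  refine ⟨((AffineEquiv.vaddConst k (b i)).symm.trans L.toAffineEquiv).trans
    (AffineEquiv.vaddConst k (c i)), fun j => ?_⟩
  rcases eq_or_ne j i with rfl | hj
  · simp
  · have hL : L (b j -ᵥ b i) = c j -ᵥ c i := by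
      rw [← b.basisOf_apply i ⟨j, hj⟩, ← c.basisOf_apply i ⟨j, hj⟩, Module.Basis.equiv_apply]
      rfl
    simp [hL]

theorem coord_apply_of_apply_eq_perm (b : AffineBasis ι k P) (g : P →ᵃ[k] P)
    (σ : Equiv.Perm ι) (hg : ∀ j, g (b j) = b (σ j)) (i : ι) (x : P) :
    b.coord (σ i) (g x) = b.coord i x := by
  classical
  suffices (b.coord (σ i)).comp g = b.coord i from congrArg (· x) this
  refine AffineMap.ext_on b.tot ?_
  rintro _ ⟨j, rfl⟩
  simp [hg, coord_apply, σ.injective.eq_iff]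

end Ring

theorem centroid_eq_iff [Fintype ι] [DivisionRing k] [Module k V] [CharZero k]
    (b : AffineBasis ι k P) {x : P} :
    Finset.univ.centroid k b = x ↔ ∀ i, b.coord i x = (Fintype.card ι : k)⁻¹ := by
  constructor
  · rintro rfl i
    simp
  · intro hx
    exact b.ext_elem fun i => by simp [hx]

end AffineBasis

section Average

variable {E F : Type*} [NormedAddCommGroup E] [NormedSpace ℝ E] [FiniteDimensional ℝ E]
  [NormedAddCommGroup F] [NormedSpace ℝ F] [MeasurableSpace E]

theorem AffineMap.average_comp_comm [CompleteSpace F] {ν : Measure E} [IsFiniteMeasure ν]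
    [NeZero ν] (f : E →ᵃ[ℝ] F) (hint : Integrable (fun x => x) ν) :
    ⨍ x, f x ∂ν = f (⨍ x, x ∂ν) := by
  set L := LinearMap.toContinuousLinearMap f.linear
  have hint' : Integrable (fun x => x) ((ν Set.univ)⁻¹ • ν) :=
    hint.smul_measure (by simp [NeZero.ne])
  have hf : ⇑f = fun x => L x + f 0 := f.decomp
  rw [average, average, hf]
  beta_reduce
  rw [integral_add (L.integrable_comp hint') (integrable_const _), integral_const,
    L.integral_comp_comm hint']
  simp

variable [BorelSpace E] (μ : Measure E) [μ.IsAddHaarMeasure]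

theorem setAverage_image_affineEquiv (f : E ≃ᵃ[ℝ] E) {K : Set E} (hK : MeasurableSet K)
    (g : E → F) : ⨍ x in f '' K, g x ∂μ = ⨍ x in K, g (f x) ∂μ := by
  set L := LinearMap.toContinuousLinearMap (f.linear : E →ₗ[ℝ] E)
  have hf' : ∀ x ∈ K, HasFDerivWithinAt f L K x := fun x _ => by
    rw [show ⇑f = fun x => L x + f 0 from (f : E →ᵃ[ℝ] E).decomp]
    exact L.hasFDerivWithinAt.add_const _
  have hdet : |L.det| ≠ 0 := by
    simpa [L, ContinuousLinearMap.det] using (LinearEquiv.isUnit_det' f.linear).ne_zero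
  have hvol : μ (f '' K) = ENNReal.ofReal |L.det| * μ K := by
    rw [← lintegral_abs_det_fderiv_eq_addHaar_image μ hK hf' f.injective.injOn,
      setLIntegral_const]
  rw [setAverage_eq, setAverage_eq, measureReal_def, measureReal_def, hvol,
    integral_image_eq_integral_abs_det_fderiv_smul μ hK hf' f.injective.injOn, integral_smul,
    ENNReal.toReal_mul, ENNReal.toReal_ofReal (abs_nonneg _), mul_inv_rev, mul_smul,
    inv_smul_smul₀ hdet]

theorem AffineBasis.setAverage_convexHull_eq_centroid {ι : Type*} [Fintype ι]
    (b : AffineBasis ι ℝ E) :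
    ⨍ x in convexHull ℝ (Set.range b), x ∂μ = Finset.univ.centroid ℝ b := by
  set K := convexHull ℝ (Set.range b)
  set c := ⨍ x in K, x ∂μ
  have hKc : IsCompact K := (Set.finite_range b).isCompact_convexHull (𝕜 := ℝ)
  have hKm : MeasurableSet K := hKc.isClosed.measurableSet
  have : IsFiniteMeasure (μ.restrict K) := isFiniteMeasure_restrict.2 hKc.measure_lt_top.ne
  have : NeZero (μ.restrict K) := ⟨by
    rw [Ne, Measure.restrict_eq_zero]
    exact (Measure.measure_pos_of_nonempty_interior μ
      ⟨_, b.centroid_mem_interior_convexHull⟩).ne'⟩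
  have hint : Integrable (fun x => x) (μ.restrict K) :=
    continuous_id.continuousOn.integrableOn_compact hKc
  have hsymm : ∀ (σ : Equiv.Perm ι) i, b.coord (σ i) c = b.coord i c := by
    intro σ i
    obtain ⟨g, hg⟩ := b.exists_affineEquiv_apply_eq (b.reindex σ.symm)
    have hgb : ∀ j, g (b j) = b (σ j) := by simpa using hg
    have hgK : g '' K = K := by
      rw [← AffineEquiv.coe_toAffineMap, AffineMap.image_convexHull, ← Set.range_comp,
        show ⇑g.toAffineMap ∘ b = b ∘ σ from funext hgb, σ.surjective.range_comp]
    have hgc : g c = c := calc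
      g c = ⨍ x in K, g x ∂μ := (g.toAffineMap.average_comp_comm hint).symm
      _ = c := by rw [← setAverage_image_affineEquiv μ g hKm fun x => x, hgK]
    calc b.coord (σ i) c = b.coord (σ i) (g c) := by rw [hgc]
      _ = b.coord i c := b.coord_apply_of_apply_eq_perm g σ hgb i c
  classical
  refine (b.centroid_eq_iff.2 fun i => ?_).symm
  have hconst : ∀ j, b.coord j c = b.coord i c := fun j => by
    simpa using hsymm (Equiv.swap i j) i
  have hsum := b.sum_coord_apply_eq_one c
  simp only [hconst, Finset.sum_const, Finset.card_univ, nsmul_eq_mul] at hsum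
  exact eq_inv_of_mul_eq_one_right hsum

end Average

namespace AffineBasis

variable {ι E : Type*} [NormedAddCommGroup E] [InnerProductSpace ℝ E] (b : AffineBasis ι ℝ E)

theorem sum_coord_zero_mul_one_sub_inner [Fintype ι] (y : E) :
    ∑ i, b.coord i 0 * (1 - ⟪b i, y⟫) = 1 := by
  simp only [mul_sub, mul_one, Finset.sum_sub_distrib, b.sum_coord_apply_eq_one,
    ← real_inner_smul_left, ← sum_inner, b.linear_combination_coord_eq_self, inner_zero_left,
    sub_zero]

variable [FiniteDimensional ℝ E]

def polarVertex (i : ι) : E :=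
  (InnerProductSpace.toDual ℝ E).symm
    (-(b.coord i 0)⁻¹ • LinearMap.toContinuousLinearMap (b.coord i).linear)

theorem inner_polarVertex {i : ι} (hi : b.coord i 0 ≠ 0) (x : E) :
    ⟪x, b.polarVertex i⟫ = 1 - b.coord i x / b.coord i 0 := by
  have hx : b.coord i x = (b.coord i).linear x + b.coord i 0 := congrFun (b.coord i).decomp x
  rw [real_inner_comm, polarVertex, InnerProductSpace.toDual_symm_apply, hx, smul_apply,
    LinearMap.coe_toContinuousLinearMap', smul_eq_mul]
  field_simp
  ring

variable [Fintype ι]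

theorem sum_smul_polarVertex (h : ∀ i, b.coord i 0 ≠ 0) (y : E) :
    ∑ i, (b.coord i 0 * (1 - ⟪b i, y⟫)) • b.polarVertex i = y := by
  refine ext_inner_left ℝ fun x => ?_
  have hterm : ∀ i, b.coord i 0 * (1 - ⟪b i, y⟫) * ⟪x, b.polarVertex i⟫ =
      b.coord i 0 * (1 - ⟪b i, y⟫) - b.coord i x + ⟪b.coord i x • b i, y⟫ := fun i => by
    rw [b.inner_polarVertex (h i), real_inner_smul_left]
    field_simp [h i]
    ring
  simp only [inner_sum, real_inner_smul_right, hterm, Finset.sum_add_distrib,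
    Finset.sum_sub_distrib, b.sum_coord_zero_mul_one_sub_inner, b.sum_coord_apply_eq_one,
    ← sum_inner, b.linear_combination_coord_eq_self, sub_self, zero_add]

theorem affineSpan_range_polarVertex (h : ∀ i, b.coord i 0 ≠ 0) :
    affineSpan ℝ (Set.range b.polarVertex) = ⊤ := by
  refine eq_top_iff.2 fun y _ => ?_
  rw [← b.sum_smul_polarVertex h y, ← Finset.univ.affineCombination_eq_linear_combination _ _
    (b.sum_coord_zero_mul_one_sub_inner y)]
  exact affineCombination_mem_affineSpan (b.sum_coord_zero_mul_one_sub_inner y) _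

def polar (h : ∀ i, b.coord i 0 ≠ 0) : AffineBasis ι ℝ E where
  toFun := b.polarVertex
  ind' := affineIndependent_of_affineSpan_eq_top (b.affineSpan_range_polarVertex h)
    b.card_eq_finrank_add_one
  tot' := b.affineSpan_range_polarVertex h

theorem coord_polar (h : ∀ i, b.coord i 0 ≠ 0) (i : ι) (y : E) :
    (b.polar h).coord i y = b.coord i 0 * (1 - ⟪b i, y⟫) := by
  have hw := b.sum_coord_zero_mul_one_sub_inner y
  have hy : Finset.univ.affineCombination ℝ (b.polar h)
      (fun i => b.coord i 0 * (1 - ⟪b i, y⟫)) = y := by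
    rw [Finset.univ.affineCombination_eq_linear_combination _ _ hw]
    exact b.sum_smul_polarVertex h y
  calc (b.polar h).coord i y = (b.polar h).coord i (Finset.univ.affineCombination ℝ (b.polar h)
        (fun i => b.coord i 0 * (1 - ⟪b i, y⟫))) := by rw [hy]
    _ = b.coord i 0 * (1 - ⟪b i, y⟫) := coord_apply_combination_of_mem _ (Finset.mem_univ i) hw

theorem coord_polar_zero (h : ∀ i, b.coord i 0 ≠ 0) (i : ι) :
    (b.polar h).coord i 0 = b.coord i 0 := by
  simp [coord_polar]

theorem convexHull_polar (h : ∀ i, 0 < b.coord i 0) :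
    convexHull ℝ (Set.range (b.polar fun i => (h i).ne')) = {y | ∀ i, ⟪b i, y⟫ ≤ 1} := by
  ext y
  simp [convexHull_eq_nonneg_coord, coord_polar, mul_nonneg_iff_of_pos_left (h _)]

end AffineBasis

theorem polarSet_convexHull {d : ℕ} (s : Set (En d)) :
    polarSet (convexHull ℝ s) = polarSet s := by
  ext y
  refine ⟨fun hy x hx => hy x (subset_convexHull ℝ s hx), fun hy => ?_⟩
  have hconv : Convex ℝ {x : En d | ⟪x, y⟫ ≤ 1} :=
    convex_halfSpace_le ⟨fun a b => inner_add_left a b y, fun c a => real_inner_smul_left a y c⟩ 1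
  exact fun x hx => convexHull_min hy hconv hx

theorem simplex_polar_centroid_general (d : ℕ)
    (p : Fin (d + 1) → En d) (hp : AffineIndependent ℝ p)
    (h0 : (0 : En d) ∈ interior (convexHull ℝ (Set.range p))) :
    centroidE (polarSet (convexHull ℝ (Set.range p))) = 0 ↔
      centroidE (convexHull ℝ (Set.range p)) = 0 := by
  have hspan : affineSpan ℝ (Set.range p) = ⊤ :=
    interior_convexHull_nonempty_iff_affineSpan_eq_top.1 ⟨0, h0⟩
  let b : AffineBasis (Fin (d + 1)) ℝ (En d) := ⟨p, hp, hspan⟩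
  rw [show p = ⇑b from rfl] at h0 ⊢
  rw [b.interior_convexHull] at h0
  have hpolar : polarSet (convexHull ℝ (Set.range b)) =
      convexHull ℝ (Set.range (b.polar fun i => (h0 i).ne')) := by
    rw [b.convexHull_polar h0, polarSet_convexHull]
    ext
    simp [polarSet]
  rw [hpolar, centroidE, centroidE, AffineBasis.setAverage_convexHull_eq_centroid volume,
    b.setAverage_convexHull_eq_centroid volume, AffineBasis.centroid_eq_iff, b.centroid_eq_iff]
  simp only [AffineBasis.coord_polar_zero]

/-- For a nondegenerate simplex `S` in `ℝ^d` with the origin in its interior,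
the origin is the center of mass of the polar simplex `S°` if and only if it is
the center of mass of `S`. -/
theorem simplex_polar_centroid (d : ℕ) (hd : 0 < d)
    (p : Fin (d + 1) → En d) (hp : AffineIndependent ℝ p)
    (h0 : (0 : En d) ∈ interior (convexHull ℝ (Set.range p))) :
    centroidE (polarSet (convexHull ℝ (Set.range p))) = 0 ↔
      centroidE (convexHull ℝ (Set.range p)) = 0 :=
  simplex_polar_centroid_general d p hp h0
end
end

section
/- Let S be a nondegenerate simplex in ℝ^d with vertices p₁,…,p_{d+1} containing the origin o in its interior. For each i, let n_i be the orthogonal projection of o onto the facet hyperplane not containing p_i, and let α_i be the angle between p_i and n_i. Then o is the centroid of S if and only if cos(α_i)·|p_i| = −d·|n_i| for all i. -/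
open scoped RealInnerProductSpace

noncomputable section

/-!
Write the origin in barycentric coordinates, `0 = ∑ cⱼ pⱼ` with `∑ cⱼ = 1` and all `cⱼ > 0`.
Every vertex `pⱼ` with `j ≠ i` lies on the facet hyperplane through `nᵢ` orthogonal to `nᵢ`,
so `⟪pⱼ, nᵢ⟫ = ‖nᵢ‖²`, and pairing `∑ cⱼ pⱼ = 0` with `nᵢ` gives
`cᵢ ⟪pᵢ, nᵢ⟫ + (1 - cᵢ) ‖nᵢ‖² = 0`. Since `nᵢ ≠ 0`, the cosine condition
`⟪pᵢ, nᵢ⟫ = -d ‖nᵢ‖²` is therefore equivalent to `cᵢ = 1 / (d + 1)`, and the origin is the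
centroid exactly when all its barycentric coordinates equal `1 / (d + 1)`.
-/

section InnerProductSpace

variable {V : Type*} [NormedAddCommGroup V] [InnerProductSpace ℝ V]

theorem real_inner_div_norm_mul_norm_mul_norm (x y : V) :
    ⟪x, y⟫ / (‖x‖ * ‖y‖) * ‖x‖ = ⟪x, y⟫ / ‖y‖ := by
  rcases eq_or_ne x 0 with rfl | hx
  · simp
  · field_simp [norm_ne_zero_iff.mpr hx]

theorem real_inner_eq_norm_sq_of_forall_inner_sub_self {s : Set V} {n x : V}
    (hn : ∀ y ∈ s, ⟪y - n, n⟫ = 0) (hx : x ∈ s) : ⟪x, n⟫ = ‖n‖ ^ 2 := by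
  rw [← real_inner_self_eq_norm_sq, ← sub_eq_zero, ← inner_sub_left]
  exact hn x hx

theorem mul_inner_add_one_sub_mul_norm_sq_eq_zero {ι : Type*} [Fintype ι] [DecidableEq ι]
    {p : ι → V} {c : ι → ℝ} {n : V} (hc : ∑ j, c j = 1) (hcp : ∑ j, c j • p j = 0) {i : ι}
    (hpn : ∀ j ≠ i, ⟪p j, n⟫ = ‖n‖ ^ 2) :
    c i * ⟪p i, n⟫ + (1 - c i) * ‖n‖ ^ 2 = 0 := by
  have hrest : ∑ j ∈ Finset.univ.erase i, c j = 1 - c i := by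
    rw [← hc, ← Finset.add_sum_erase _ c (Finset.mem_univ i), add_sub_cancel_left]
  calc c i * ⟪p i, n⟫ + (1 - c i) * ‖n‖ ^ 2
      = c i * ⟪p i, n⟫ + ∑ j ∈ Finset.univ.erase i, c j * ⟪p j, n⟫ := by
        rw [← hrest, Finset.sum_mul]
        congr 1
        exact Finset.sum_congr rfl fun j hj => by rw [hpn j (Finset.ne_of_mem_erase hj)]
    _ = ⟪∑ j, c j • p j, n⟫ := by
        simp only [sum_inner, real_inner_smul_left]
        exact Finset.add_sum_erase _ (fun j => c j * ⟪p j, n⟫) (Finset.mem_univ i)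
    _ = 0 := by rw [hcp, inner_zero_left]

end InnerProductSpace

theorem eq_neg_mul_iff_eq_inv_add_one {a c d m : ℝ} (hd : d + 1 ≠ 0) (hm : m ≠ 0)
    (h : c * a + (1 - c) * m = 0) : a = -d * m ↔ c = (d + 1)⁻¹ := by
  constructor
  · rintro rfl
    refine eq_inv_of_mul_eq_one_left ?_
    have : m * (1 - c * (d + 1)) = 0 := by linear_combination h
    linarith [(mul_eq_zero.mp this).resolve_left hm]
  · rintro rfl
    field_simp at h
    linear_combination h

namespace AffineBasis

variable {ι k : Type*} [Ring k]

theorem coord_eq_zero_of_mem_affineSpan_image_ne {V P : Type*} [AddCommGroup V] [Module k V]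
    [AddTorsor V P] (b : AffineBasis ι k P) {i : ι} {x : P}
    (hx : x ∈ affineSpan k (b '' {j | j ≠ i})) : b.coord i x = 0 := by
  have hmap : b.coord i x ∈ affineSpan k (b.coord i '' (b '' {j | j ≠ i})) := by
    rw [← AffineSubspace.map_span]
    exact AffineSubspace.mem_map_of_mem _ hx
  have hzero : b.coord i '' (b '' {j | j ≠ i}) ⊆ {0} := by
    rintro _ ⟨_, ⟨j, hj, rfl⟩, rfl⟩
    exact b.coord_apply_ne (Ne.symm hj)
  exact (AffineSubspace.mem_affineSpan_singleton k k).mp (affineSpan_mono k hzero hmap)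

theorem sum_smul_eq_iff_coord_eq [Fintype ι] {V : Type*} [AddCommGroup V] [Module k V]
    (b : AffineBasis ι k V) {w : ι → k} (hw : ∑ i, w i = 1) (v : V) :
    ∑ i, w i • b i = v ↔ ∀ i, b.coord i v = w i := by
  constructor
  · rintro rfl i
    rw [← Finset.univ.affineCombination_eq_linear_combination _ _ hw]
    exact b.coord_apply_combination_of_mem (Finset.mem_univ i) hw
  · intro h
    simp_rw [← h]
    exact b.linear_combination_coord_eq_self v

end AffineBasis

theorem centroid_iff_cos_condition_general (d : ℕ)
    (p n : Fin (d + 1) → En d) (hp : AffineIndependent ℝ p)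
    (h0 : (0 : En d) ∈ interior (convexHull ℝ (Set.range p)))
    (hn : ∀ i, n i ∈ affineSpan ℝ (p '' {j | j ≠ i}) ∧
      ∀ x ∈ affineSpan ℝ (p '' {j | j ≠ i}), ⟪x - n i, n i⟫ = 0) :
    (((d : ℝ) + 1)⁻¹ • ∑ i, p i = 0) ↔
      ∀ i, ⟪p i, n i⟫ / (‖p i‖ * ‖n i‖) * ‖p i‖ = -(d : ℝ) * ‖n i‖ := by
  let b : AffineBasis (Fin (d + 1)) ℝ (En d) :=
    ⟨p, hp, interior_convexHull_nonempty_iff_affineSpan_eq_top.mp ⟨0, h0⟩⟩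
  have hcoord_pos : ∀ i, 0 < b.coord i 0 := by
    have h0b : (0 : En d) ∈ interior (convexHull ℝ (Set.range b)) := h0
    rwa [b.interior_convexHull] at h0b
  have hn_ne : ∀ i, n i ≠ 0 := fun i hi =>
    (hcoord_pos i).ne' (hi ▸ b.coord_eq_zero_of_mem_affineSpan_image_ne (hn i).1)
  have hrel : ∀ i, b.coord i 0 * ⟪p i, n i⟫ + (1 - b.coord i 0) * ‖n i‖ ^ 2 = 0 := fun i =>
    mul_inner_add_one_sub_mul_norm_sq_eq_zero (b.sum_coord_apply_eq_one 0)
      (b.linear_combination_coord_eq_self 0) fun j hj =>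
        real_inner_eq_norm_sq_of_forall_inner_sub_self (hn i).2
          (subset_affineSpan ℝ _ ⟨j, hj, rfl⟩)
  have hw : ∑ _i : Fin (d + 1), ((d : ℝ) + 1)⁻¹ = 1 := by
    rw [Finset.sum_const, Finset.card_univ, Fintype.card_fin, nsmul_eq_mul]
    push_cast
    field_simp
  rw [Finset.smul_sum]
  refine (b.sum_smul_eq_iff_coord_eq hw 0).trans (forall_congr' fun i => ?_)
  rw [real_inner_div_norm_mul_norm_mul_norm, div_eq_iff (norm_ne_zero_iff.mpr (hn_ne i)),
    mul_assoc, ← sq,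
    eq_neg_mul_iff_eq_inv_add_one (by positivity) (by simpa using hn_ne i) (hrel i)]

/-- Let `S` be a nondegenerate simplex in `ℝ^d` with vertices `p 0, …, p d` and the
origin in its interior, and for each `i` let `n i` be the orthogonal projection of the
origin onto the facet hyperplane spanned by the vertices other than `p i`. Then the
origin is the centroid of `S` if and only if `cos α_i * |p_i| = -d * |n_i|` for all `i`,
where `cos α_i = ⟪p_i, n_i⟫ / (|p_i| |n_i|)` is the cosine of the angle between
`p_i` and `n_i`. -/
theorem centroid_iff_cos_condition (d : ℕ) (hd : 0 < d)
    (p n : Fin (d + 1) → En d) (hp : AffineIndependent ℝ p)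
    (h0 : (0 : En d) ∈ interior (convexHull ℝ (Set.range p)))
    (hn : ∀ i, n i ∈ affineSpan ℝ (p '' {j | j ≠ i}) ∧
      ∀ x ∈ affineSpan ℝ (p '' {j | j ≠ i}), ⟪x - n i, n i⟫ = 0) :
    (((d : ℝ) + 1)⁻¹ • ∑ i, p i = 0) ↔
      ∀ i, ⟪p i, n i⟫ / (‖p i‖ * ‖n i‖) * ‖p i‖ = -(d : ℝ) * ‖n i‖ :=
  centroid_iff_cos_condition_general d p n hp h0 hn
end
end

section
/- Let K = [0,1]² and let C₁, C₂ ⊆ K be compact sets such that C₁ separates the faces {0}×[0,1] and {1}×[0,1] (i.e., K \ C₁ is a disjoint union of two relatively open sets containing these two faces respectively), and C₂ similarly separates [0,1]×{0} and [0,1]×{1}. Then C₁ ∩ C₂ ≠ ∅. -/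
/-! If `C₁ ∩ C₂ = ∅`, distance functions turn the two separations into continuous `f, g` with
opposite signs on opposite faces and no common zero on the square `K`, so `H = f + g i` does not
vanish on `K`. As `K` is convex, `H` has a continuous logarithm on `K`. The boundary of `K` is the
sup-norm sphere of radius `1/2` about its centre `c`; there `H p` and `p - c` lie in a common open
half-plane, so `H / (p - c)` avoids the closed negative real axis and subtracting its principal
logarithm gives a continuous logarithm of `p - c` on the sphere. No such logarithm exists: its
values at antipodal points differ by a solution of `exp z = -1`, while by the intermediate value
theorem their imaginary parts agree somewhere. -/

/-- `C` separates `B` and `B'` within `K`: `K \ C` is the disjoint union of two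
relatively open subsets of `K` containing `B` and `B'` respectively. -/
def SeparatesIn (K C B B' : Set (ℝ × ℝ)) : Prop :=
  ∃ Q Q' : Set (ℝ × ℝ), IsOpen Q ∧ IsOpen Q' ∧
    K \ C = (K ∩ Q) ∪ (K ∩ Q') ∧ Disjoint (K ∩ Q) (K ∩ Q') ∧ B ⊆ Q ∧ B' ⊆ Q'

open Set Complex

theorem Convex.exists_continuousOn_exp_eq {E : Type*} [AddCommGroup E] [Module ℝ E]
    [TopologicalSpace E] [IsTopologicalAddGroup E] [ContinuousSMul ℝ E] [LocallyConvexSpace ℝ E]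
    {s : Set E} (hs : Convex ℝ s) {f : E → ℂ} (hf : ContinuousOn f s) (hf0 : ∀ x ∈ s, f x ≠ 0) :
    ∃ L : E → ℂ, ContinuousOn L s ∧ ∀ x ∈ s, exp (L x) = f x := by
  classical
  rcases s.eq_empty_or_nonempty with rfl | hne
  · exact ⟨0, continuousOn_empty _, fun _ => False.elim⟩
  have := hs.contractibleSpace hne
  have := hs.locallyPathConnectedSpace
  obtain ⟨x₀, hx₀⟩ := hne
  obtain ⟨L, ⟨-, hL⟩, -⟩ := isCoveringMapOn_exp.existsUnique_continuousMap_lifts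
    ⟨s.domRestrict f, hf.domRestrict⟩ (a₀ := ⟨x₀, hx₀⟩) (exp_log (hf0 x₀ hx₀)) fun x => hf0 x x.2
  refine ⟨fun x => if hx : x ∈ s then L ⟨x, hx⟩ else 0, ?_, fun x hx => ?_⟩
  · rw [continuousOn_iff_continuous_domRestrict]
    convert L.continuous
    ext x
    simp [x.2]
  · simpa [hx] using congrFun hL ⟨x, hx⟩

theorem IsPreconnected.not_exists_continuousOn_exp_eq_of_antipodal {X : Type*}
    [TopologicalSpace X] {S : Set X} (hS : IsPreconnected S) (hne : S.Nonempty) {σ : X → X}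
    (hσ : ContinuousOn σ S) (hσS : MapsTo σ S S) (hσσ : Function.Involutive σ) {v : X → ℂ}
    (hv : ∀ p ∈ S, v (σ p) = -v p) :
    ¬ ∃ M : X → ℂ, ContinuousOn M S ∧ ∀ p ∈ S, exp (M p) = v p := by
  rintro ⟨M, hM, hMv⟩
  have hMσ : ContinuousOn (fun p => (M (σ p)).im) S :=
    continuous_im.comp_continuousOn (hM.comp hσ hσS)
  have hMim : ContinuousOn (fun p => (M p).im) S := continuous_im.comp_continuousOn hM
  -- `Im (M ∘ σ) - Im M` changes sign between `p` and `σ p`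
  obtain ⟨q, hq, hqeq⟩ : ∃ q ∈ S, (M (σ q)).im = (M q).im := by
    obtain ⟨p, hp⟩ := hne
    rcases le_total (M (σ p)).im (M p).im with h | h
    · exact hS.intermediate_value₂ hp (hσS hp) hMσ hMim h (by rwa [hσσ p])
    · exact hS.intermediate_value₂ (hσS hp) hp hMσ hMim (by rwa [hσσ p]) h
  set d := M (σ q) - M q
  have hd_real : (d.re : ℂ) = d := by
    apply Complex.ext <;> simp [d, hqeq]
  have hexp : exp d = -1 := by
    have hvq : v q ≠ 0 := hMv q hq ▸ exp_ne_zero _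
    rw [exp_sub, hMv _ (hσS hq), hMv q hq, hv q hq, neg_div, div_self hvq]
  have hpos : 0 < (exp d).re := by
    rw [← hd_real, ← ofReal_exp, ofReal_re]
    exact Real.exp_pos _
  rw [hexp] at hpos
  norm_num at hpos

open Metric

theorem Complex.div_mem_slitPlane_of_re_mul_pos_or_im_mul_pos {z w : ℂ}
    (h : 0 < z.re * w.re ∨ 0 < z.im * w.im) : z / w ∈ slitPlane := by
  have hw : w ≠ 0 := by rintro rfl; simp at h
  obtain ⟨q, rfl⟩ : ∃ q, z = q * w := ⟨z / w, (div_mul_cancel₀ z hw).symm⟩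
  rw [mul_div_cancel_right₀ q hw, mem_slitPlane_iff]
  by_contra! hq
  obtain ⟨hre, him⟩ := hq
  simp only [mul_re, mul_im, him, zero_mul, sub_zero, add_zero] at h
  rcases h with h | h <;> nlinarith [mul_self_nonneg w.re, mul_self_nonneg w.im]

theorem exists_continuous_neg_pos_of_separated {X : Type*} [PseudoMetricSpace X] {T T' : Set X}
    (hT : T.Nonempty) (hT' : T'.Nonempty) (h : Disjoint T (closure T'))
    (h' : Disjoint (closure T) T') :
    ∃ f : X → ℝ, Continuous f ∧ (∀ p ∈ T, f p < 0) ∧ ∀ p ∈ T', 0 < f p := by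
  refine ⟨fun p => infDist p T - infDist p T', by fun_prop, fun p hp => ?_, fun p hp => ?_⟩
  · have := (infDist_pos_iff_notMem_closure hT').1 (h.notMem_of_mem_left hp)
    simp [infDist_zero_of_mem hp, this]
  · have := (infDist_pos_iff_notMem_closure hT).1 (h'.notMem_of_mem_right hp)
    simp [infDist_zero_of_mem hp, this]

theorem SeparatesIn.exists_continuous_neg_pos {K C B B' : Set (ℝ × ℝ)} (h : SeparatesIn K C B B')
    (hB : (K ∩ B).Nonempty) (hB' : (K ∩ B').Nonempty) :
    ∃ f : ℝ × ℝ → ℝ, Continuous f ∧ (∀ p ∈ K ∩ B, f p < 0) ∧ (∀ p ∈ K ∩ B', 0 < f p) ∧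
      ∀ p ∈ K, f p = 0 → p ∈ C := by
  obtain ⟨Q, Q', hQ, hQ', hKC, hdisj, hBQ, hB'Q'⟩ := h
  have hsub : K ∩ B ⊆ K ∩ Q := inter_subset_inter_right K hBQ
  have hsub' : K ∩ B' ⊆ K ∩ Q' := inter_subset_inter_right K hB'Q'
  have hQ_T' : Disjoint Q (K ∩ Q') :=
    disjoint_left.2 fun x hx hx' => hdisj.notMem_of_mem_right hx' ⟨hx'.1, hx⟩
  have hT_Q' : Disjoint (K ∩ Q) Q' :=
    disjoint_left.2 fun x hx hx' => hdisj.notMem_of_mem_left hx ⟨hx.1, hx'⟩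
  obtain ⟨f, hf, hneg, hpos⟩ := exists_continuous_neg_pos_of_separated (hB.mono hsub)
    (hB'.mono hsub') ((hQ_T'.closure_right hQ).mono_left inter_subset_right)
    ((hT_Q'.closure_left hQ').mono_right inter_subset_right)
  refine ⟨f, hf, fun p hp => hneg p (hsub hp), fun p hp => hpos p (hsub' hp), fun p hp hfp => ?_⟩
  by_contra hpC
  have : p ∈ K \ C := ⟨hp, hpC⟩
  rw [hKC] at this
  rcases this with hpQ | hpQ'
  · exact (hneg p hpQ).ne hfp
  · exact (hpos p hpQ').ne' hfp

theorem mem_Icc_and_faces_of_mem_sphere {p : ℝ × ℝ}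
    (hp : p ∈ sphere ((1 / 2 : ℝ), (1 / 2 : ℝ)) (1 / 2)) :
    p ∈ Icc ((0 : ℝ), (0 : ℝ)) (1, 1) ∧ (p.1 = 0 ∨ p.1 = 1 ∨ p.2 = 0 ∨ p.2 = 1) := by
  rw [mem_sphere, Prod.dist_eq, Real.dist_eq, Real.dist_eq] at hp
  have h₁ := abs_le.1 (hp ▸ le_max_left |p.1 - 1 / 2| |p.2 - 1 / 2|)
  have h₂ := abs_le.1 (hp ▸ le_max_right |p.1 - 1 / 2| |p.2 - 1 / 2|)
  refine ⟨⟨⟨by linarith, by linarith⟩, ⟨by linarith, by linarith⟩⟩, ?_⟩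
  rcases max_choice |p.1 - 1 / 2| |p.2 - 1 / 2| with h | h <;> rw [h, abs_eq (by norm_num)] at hp
  · rcases hp with hp | hp
    · exact Or.inr (Or.inl (by linarith))
    · exact Or.inl (by linarith)
  · rcases hp with hp | hp
    · exact Or.inr (Or.inr (Or.inr (by linarith)))
    · exact Or.inr (Or.inr (Or.inl (by linarith)))

theorem not_exists_continuousOn_exp_eq_on_sphere (c : ℝ × ℝ) {r : ℝ} (hr : 0 ≤ r) :
    ¬ ∃ M : ℝ × ℝ → ℂ, ContinuousOn M (sphere c r) ∧
      ∀ p ∈ sphere c r, exp (M p) = (p.1 - c.1 : ℝ) + (p.2 - c.2 : ℝ) * I := by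
  have hrank : 1 < Module.rank ℝ (ℝ × ℝ) := by
    simp only [rank_prod, Module.rank_self, Cardinal.lift_id]
    norm_num
  refine (isPreconnected_sphere hrank c r).not_exists_continuousOn_exp_eq_of_antipodal
    (NormedSpace.sphere_nonempty.2 hr) (σ := Equiv.pointReflection c)
    (AffineIsometryEquiv.pointReflection ℝ c).continuous.continuousOn (fun p hp => ?_)
    (Equiv.pointReflection_involutive c) (fun p _ => ?_)
  · rw [mem_sphere, dist_pointReflection_left, dist_comm]
    exact hp
  · simp only [Equiv.pointReflection_apply, vsub_eq_sub, vadd_eq_add, Prod.fst_add, Prod.snd_add,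
      Prod.fst_sub, Prod.snd_sub]
    push_cast
    ring

theorem poincare_miranda {f g : ℝ × ℝ → ℝ}
    (hf : ContinuousOn f (Icc (0, 0) (1, 1))) (hg : ContinuousOn g (Icc (0, 0) (1, 1)))
    (hf₀ : ∀ p ∈ Icc ((0 : ℝ), (0 : ℝ)) (1, 1), p.1 = 0 → f p < 0)
    (hf₁ : ∀ p ∈ Icc ((0 : ℝ), (0 : ℝ)) (1, 1), p.1 = 1 → 0 < f p)
    (hg₀ : ∀ p ∈ Icc ((0 : ℝ), (0 : ℝ)) (1, 1), p.2 = 0 → g p < 0)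
    (hg₁ : ∀ p ∈ Icc ((0 : ℝ), (0 : ℝ)) (1, 1), p.2 = 1 → 0 < g p) :
    ∃ p ∈ Icc ((0 : ℝ), (0 : ℝ)) (1, 1), f p = 0 ∧ g p = 0 := by
  by_contra! hfg
  set K := Icc ((0 : ℝ), (0 : ℝ)) (1, 1)
  set S := sphere ((1 / 2 : ℝ), (1 / 2 : ℝ)) (1 / 2)
  set H : ℝ × ℝ → ℂ := fun p => f p + g p * I
  set ι : ℝ × ℝ → ℂ := fun p => (p.1 - 1 / 2 : ℝ) + (p.2 - 1 / 2 : ℝ) * I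
  have hSK : S ⊆ K := fun p hp => (mem_Icc_and_faces_of_mem_sphere hp).1
  have hH : ContinuousOn H K := by fun_prop
  have hH0 : ∀ p ∈ K, H p ≠ 0 := fun p hp hHp =>
    hfg p hp (by simpa [H] using congrArg re hHp) (by simpa [H] using congrArg im hHp)
  obtain ⟨L, hL, hLH⟩ := (convex_Icc _ _).exists_continuousOn_exp_eq hH hH0
  -- on each face `H` and `ι` point into the same open half-plane
  have hslit : ∀ p ∈ S, H p / ι p ∈ slitPlane := by
    intro p hp
    obtain ⟨hpK, h | h | h | h⟩ := mem_Icc_and_faces_of_mem_sphere hp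
    all_goals apply div_mem_slitPlane_of_re_mul_pos_or_im_mul_pos
    all_goals simp only [H, ι, add_re, add_im, ofReal_re, ofReal_im, mul_re, mul_im, I_re, I_im, h]
    · exact Or.inl (by nlinarith [hf₀ p hpK h])
    · exact Or.inl (by nlinarith [hf₁ p hpK h])
    · exact Or.inr (by nlinarith [hg₀ p hpK h])
    · exact Or.inr (by nlinarith [hg₁ p hpK h])
  refine not_exists_continuousOn_exp_eq_on_sphere ((1 / 2 : ℝ), (1 / 2 : ℝ)) (r := 1 / 2)
    (by norm_num) ⟨fun p => L p - log (H p / ι p), ?_, fun p hp => ?_⟩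
  · refine (hL.mono hSK).sub (((hH.mono hSK).div (by fun_prop) fun p hp => ?_).clog hslit)
    exact (div_ne_zero_iff.1 (slitPlane_ne_zero (hslit p hp))).2
  · rw [exp_sub, exp_log (slitPlane_ne_zero (hslit p hp)), hLH p (hSK hp),
      div_div_cancel₀ (hH0 p (hSK hp))]

theorem cube_separation_general (C₁ C₂ : Set (ℝ × ℝ))
    (hsep₁ : SeparatesIn (Set.Icc (0, 0) (1, 1)) C₁
      {p | p ∈ Set.Icc ((0 : ℝ), (0 : ℝ)) (1, 1) ∧ p.1 = 0}
      {p | p ∈ Set.Icc ((0 : ℝ), (0 : ℝ)) (1, 1) ∧ p.1 = 1})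
    (hsep₂ : SeparatesIn (Set.Icc (0, 0) (1, 1)) C₂
      {p | p ∈ Set.Icc ((0 : ℝ), (0 : ℝ)) (1, 1) ∧ p.2 = 0}
      {p | p ∈ Set.Icc ((0 : ℝ), (0 : ℝ)) (1, 1) ∧ p.2 = 1}) :
    (C₁ ∩ C₂).Nonempty := by
  have hK : ∀ {x y : ℝ}, x ∈ Icc 0 1 → y ∈ Icc 0 1 → (x, y) ∈ Icc ((0 : ℝ), (0 : ℝ)) (1, 1) :=
    fun hx hy => Icc_prod_Icc (0 : ℝ) 1 (0 : ℝ) 1 ▸ mk_mem_prod hx hy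
  have h00 := hK unitInterval.zero_mem unitInterval.zero_mem
  have h10 := hK unitInterval.one_mem unitInterval.zero_mem
  have h01 := hK unitInterval.zero_mem unitInterval.one_mem
  obtain ⟨f, hf, hf₀, hf₁, hfC⟩ := hsep₁.exists_continuous_neg_pos
    ⟨_, h00, h00, rfl⟩ ⟨_, h10, h10, rfl⟩
  obtain ⟨g, hg, hg₀, hg₁, hgC⟩ := hsep₂.exists_continuous_neg_pos
    ⟨_, h00, h00, rfl⟩ ⟨_, h01, h01, rfl⟩
  obtain ⟨p, hp, hfp, hgp⟩ := poincare_miranda hf.continuousOn hg.continuousOn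
    (fun p hp h => hf₀ p ⟨hp, hp, h⟩) (fun p hp h => hf₁ p ⟨hp, hp, h⟩)
    (fun p hp h => hg₀ p ⟨hp, hp, h⟩) (fun p hp h => hg₁ p ⟨hp, hp, h⟩)
  exact ⟨p, hfC p hp hfp, hgC p hp hgp⟩

/-- Cube Separation Theorem in dimension 2: if the compact set `C₁ ⊆ [0,1]²` separates
the left and right faces of the square, and the compact set `C₂` separates the bottom
and top faces, then `C₁ ∩ C₂ ≠ ∅`. -/
theorem cube_separation (C₁ C₂ : Set (ℝ × ℝ))
    (hC₁ : IsCompact C₁) (hC₂ : IsCompact C₂)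
    (h₁ : C₁ ⊆ Set.Icc (0, 0) (1, 1)) (h₂ : C₂ ⊆ Set.Icc (0, 0) (1, 1))
    (hsep₁ : SeparatesIn (Set.Icc (0, 0) (1, 1)) C₁
      {p | p ∈ Set.Icc ((0 : ℝ), (0 : ℝ)) (1, 1) ∧ p.1 = 0}
      {p | p ∈ Set.Icc ((0 : ℝ), (0 : ℝ)) (1, 1) ∧ p.1 = 1})
    (hsep₂ : SeparatesIn (Set.Icc (0, 0) (1, 1)) C₂
      {p | p ∈ Set.Icc ((0 : ℝ), (0 : ℝ)) (1, 1) ∧ p.2 = 0}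
      {p | p ∈ Set.Icc ((0 : ℝ), (0 : ℝ)) (1, 1) ∧ p.2 = 1}) :
    (C₁ ∩ C₂).Nonempty :=
  cube_separation_general C₁ C₂ hsep₁ hsep₂
end
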